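/- Let n ≥ 2 and m ≥ 2 be integers, let f ∈ R_m = ℤ[x_1, ..., x_m], and let 1 ≤ i < j ≤ m. Then the coefficient of x_i x_j in f^{2^n} is given exactly by c_{f^{2^n}}(x_i x_j) = 2^n · c_f(1)^{2^n − 1} · c_f(x_i x_j) + 2^n (2^n − 1) · c_f(1)^{2^n − 2} · c_f(x_i) · c_f(x_j). -/

import Mathlib

/-! For `i ≠ j` the coefficient of `x_i x_j` in `g` is the constant term of `∂_j ∂_i g`.
Differentiating `f ^ N` twice by the Leibniz rule and taking constant terms, which is a ring
homomorphism, gives the formula for every exponent `N`, in particular for `N = 2 ^ n`. -/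

open MvPolynomial Finsupp

namespace MvPolynomial

variable {R σ : Type*}

theorem coeff_zero_pderiv [CommSemiring R] (i : σ) (p : MvPolynomial σ R) :
    coeff 0 (pderiv i p) = coeff (single i 1) p := by
  simp [coeff_pderiv]

theorem coeff_single_pderiv_of_ne [CommSemiring R] {i j : σ} (hij : i ≠ j)
    (p : MvPolynomial σ R) :
    coeff (single j 1) (pderiv i p) = coeff (single i 1 + single j 1) p := by
  rw [coeff_pderiv, single_eq_of_ne hij, add_comm]
  simp

theorem coeff_single_add_single_eq_constantCoeff_pderiv [CommSemiring R] {i j : σ}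
    (hij : i ≠ j) (p : MvPolynomial σ R) :
    coeff (single i 1 + single j 1) p = constantCoeff (pderiv j (pderiv i p)) := by
  rw [constantCoeff_eq, coeff_zero_pderiv, coeff_single_pderiv_of_ne hij]

theorem coeff_single_add_single_pow [CommRing R] {i j : σ} (hij : i ≠ j)
    (f : MvPolynomial σ R) (N : ℕ) :
    coeff (single i 1 + single j 1) (f ^ N) =
      N * coeff 0 f ^ (N - 1) * coeff (single i 1 + single j 1) f +
        N * (N - 1) * coeff 0 f ^ (N - 2) * coeff (single i 1) f * coeff (single j 1) f := by
  have hi := coeff_zero_pderiv i f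
  have hj := coeff_zero_pderiv j f
  rw [← constantCoeff_eq] at hi hj
  rw [coeff_single_add_single_eq_constantCoeff_pderiv hij,
    coeff_single_add_single_eq_constantCoeff_pderiv hij, ← constantCoeff_eq]
  rcases N with _ | N
  · simp
  simp only [pderiv_pow, pderiv_mul, Nat.cast_add, Nat.cast_one, map_add, Derivation.map_natCast,
    Derivation.map_one_eq_zero, add_zero, add_tsub_cancel_right, zero_mul, zero_add, map_mul,
    map_natCast, map_one, map_pow, hi, hj, add_sub_cancel_right, Nat.reduceSubDiff]
  ring

end MvPolynomial

theorem stmt_5_general (n m : ℕ)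
    (f : MvPolynomial (Fin m) ℤ) (i j : Fin m) (hij : i < j) :
    MvPolynomial.coeff (Finsupp.single i 1 + Finsupp.single j 1) (f ^ 2 ^ n) =
      2 ^ n * MvPolynomial.coeff 0 f ^ (2 ^ n - 1) *
          MvPolynomial.coeff (Finsupp.single i 1 + Finsupp.single j 1) f +
        2 ^ n * (2 ^ n - 1) * MvPolynomial.coeff 0 f ^ (2 ^ n - 2) *
          MvPolynomial.coeff (Finsupp.single i 1) f *
          MvPolynomial.coeff (Finsupp.single j 1) f := by
  simpa using coeff_single_add_single_pow hij.ne f (2 ^ n)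

/-- Exact formula for the coefficient of `x_i x_j` in `f^(2^n)`:
`c_{f^{2^n}}(x_i x_j) = 2^n c_f(1)^{2^n-1} c_f(x_i x_j)
  + 2^n(2^n-1) c_f(1)^{2^n-2} c_f(x_i) c_f(x_j)`. -/
theorem stmt_5 (n m : ℕ) (hn : 2 ≤ n) (hm : 2 ≤ m)
    (f : MvPolynomial (Fin m) ℤ) (i j : Fin m) (hij : i < j) :
    MvPolynomial.coeff (Finsupp.single i 1 + Finsupp.single j 1) (f ^ 2 ^ n) =
      2 ^ n * MvPolynomial.coeff 0 f ^ (2 ^ n - 1) *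
          MvPolynomial.coeff (Finsupp.single i 1 + Finsupp.single j 1) f +
        2 ^ n * (2 ^ n - 1) * MvPolynomial.coeff 0 f ^ (2 ^ n - 2) *
          MvPolynomial.coeff (Finsupp.single i 1) f *
          MvPolynomial.coeff (Finsupp.single j 1) f :=
  stmt_5_general n m f i j hij
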